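/- arXiv:2311.03506 — 2 statements merged into one kernel-verified Lean document; each statement's English description precedes it below -/
import Mathlib

section
/- For α ≥ n + 1 (n ≥ 1), 𝔪_{2n,α} ≥ d·(𝔪_{n,α} ⊗ 𝔪_{n,α}) as measures on ℝⁿ × ℝⁿ, where d = Γ(α − n/2)²/(Γ(α − n)Γ(α)); moreover d ≥ 1/2 whenever α ≥ n². -/
open MeasureTheory Real
open scoped ENNReal

noncomputable def cauchyMeasure (n : ℕ) (β : ℝ) : Measure (EuclideanSpace ℝ (Fin n)) :=
  volume.withDensity fun x =>
    ENNReal.ofReal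
      ((Real.pi ^ ((n : ℝ) / 2) * Real.Gamma (β - (n : ℝ) / 2) / Real.Gamma β)⁻¹ *
        (1 + ‖x‖ ^ 2) ^ (-β))

noncomputable def cauchyMeasure2 (n : ℕ) (α : ℝ) :
    Measure (EuclideanSpace ℝ (Fin n) × EuclideanSpace ℝ (Fin n)) :=
  volume.withDensity fun q =>
    ENNReal.ofReal
      ((Real.pi ^ (n : ℝ) * Real.Gamma (α - n) / Real.Gamma α)⁻¹ *
        (1 + ‖q.1‖ ^ 2 + ‖q.2‖ ^ 2) ^ (-α))

/-!
The measure inequality holds already between the densities: `(1 + a)(1 + b) ≥ 1 + a + b`, and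
`d` is exactly the factor turning the square of the normalising constant of `𝔪_{n,α}` into that
of `𝔪_{2n,α}`.

For the bound on `d`, put `x = α - n`, so that `1 / d = Γ(x) Γ(x + n) / Γ(x + n/2)²`.
Log-convexity of `Γ` gives `Γ(y + 1)² ≥ y Γ(y + 1/2)²`; climbing in half steps,
`Γ(x + n/2)² ≥ Γ(x)² ∏_{k<n} (x + (k - 1)/2)`, while `Γ(x + n) = Γ(x) ∏_{k<n} (x + k)`.
The ratio of the two products is `∏_{k<n} (1 + (k + 1)/(2x + k - 1))`, which is at most
`exp (n(n + 1) / (2(2x - 1))) ≤ 2` once `x ≥ n² - n` and `n ≥ 3`.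
-/

open Finset

theorem Real.Gamma_midpoint_sq_le {p q : ℝ} (hp : 0 < p) (hq : 0 < q) :
    Gamma ((p + q) / 2) ^ 2 ≤ Gamma p * Gamma q := by
  have h := Gamma_mul_add_mul_le_rpow_Gamma_mul_rpow_Gamma hp hq
    (by norm_num : (0 : ℝ) < 1 / 2) (by norm_num : (0 : ℝ) < 1 / 2) (by norm_num)
  rw [show 1 / 2 * p + 1 / 2 * q = (p + q) / 2 by ring] at h
  calc Gamma ((p + q) / 2) ^ 2 ≤ (Gamma p ^ (1 / 2 : ℝ) * Gamma q ^ (1 / 2 : ℝ)) ^ 2 :=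
        pow_le_pow_left₀ (Gamma_pos_of_pos (by linarith)).le h 2
    _ = Gamma p * Gamma q := by
        rw [mul_pow, ← rpow_mul_natCast (Gamma_pos_of_pos hp).le,
          ← rpow_mul_natCast (Gamma_pos_of_pos hq).le]
        norm_num

theorem Real.mul_Gamma_add_half_sq_le {y : ℝ} (hy : 0 < y) :
    y * Gamma (y + 1 / 2) ^ 2 ≤ Gamma (y + 1) ^ 2 := by
  have h := Gamma_midpoint_sq_le hy (by linarith : 0 < y + 1)
  rw [show (y + (y + 1)) / 2 = y + 1 / 2 by ring] at h
  calc y * Gamma (y + 1 / 2) ^ 2 ≤ y * (Gamma y * Gamma (y + 1)) := by gcongr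
    _ = Gamma (y + 1) ^ 2 := by rw [Gamma_add_one hy.ne']; ring

theorem Real.Gamma_add_nat_eq_mul_prod {x : ℝ} (hx : 0 < x) (n : ℕ) :
    Gamma (x + n) = Gamma x * ∏ k ∈ range n, (x + k) := by
  induction n with
  | zero => simp
  | succ n ih =>
    rw [prod_range_succ, ← mul_assoc, ← ih, Nat.cast_succ, ← add_assoc,
      Gamma_add_one (by positivity)]
    ring

theorem Real.Gamma_sq_mul_prod_le_Gamma_add_half_nat_sq {x : ℝ} (hx : 1 / 2 < x) (n : ℕ) :
    Gamma x ^ 2 * ∏ k ∈ range n, (x + ((k : ℝ) - 1) / 2) ≤ Gamma (x + n / 2) ^ 2 := by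
  induction n with
  | zero => simp
  | succ n ih =>
    have hy : 0 < x + ((n : ℝ) - 1) / 2 := by have := n.cast_nonneg (α := ℝ); linarith
    have step := mul_Gamma_add_half_sq_le hy
    rw [show x + ((n : ℝ) - 1) / 2 + 1 / 2 = x + n / 2 by ring,
      show x + ((n : ℝ) - 1) / 2 + 1 = x + ↑(n + 1) / 2 by push_cast; ring] at step
    rw [prod_range_succ, ← mul_assoc]
    calc Gamma x ^ 2 * (∏ k ∈ range n, (x + ((k : ℝ) - 1) / 2)) * (x + ((n : ℝ) - 1) / 2)
        ≤ Gamma (x + n / 2) ^ 2 * (x + ((n : ℝ) - 1) / 2) := by gcongr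
      _ ≤ Gamma (x + ↑(n + 1) / 2) ^ 2 := by linarith

theorem add_nat_le_add_half_mul_exp {x : ℝ} (hx : 1 < x) (k : ℕ) :
    x + k ≤ (x + ((k : ℝ) - 1) / 2) * exp ((k + 1) / (2 * x - 1)) := by
  have hk := k.cast_nonneg (α := ℝ)
  have hd : 0 < 2 * x + k - 1 := by linarith
  calc x + k = (x + ((k : ℝ) - 1) / 2) * (1 + (k + 1) / (2 * x + k - 1)) := by
        rw [one_add_div hd.ne', ← mul_div_assoc, eq_div_iff hd.ne']; ring
    _ ≤ (x + ((k : ℝ) - 1) / 2) * exp ((k + 1) / (2 * x - 1)) := by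
        gcongr
        · linarith
        · calc 1 + (k + 1) / (2 * x + k - 1) ≤ (k + 1) / (2 * x - 1) + 1 := by
                rw [add_comm]; gcongr <;> linarith
            _ ≤ _ := add_one_le_exp _

theorem prod_add_nat_le_two_mul_prod {x : ℝ} {n : ℕ} (hx : 1 ≤ x)
    (hxn : (n : ℝ) ^ 2 - n ≤ x) :
    ∏ k ∈ range n, (x + k) ≤ 2 * ∏ k ∈ range n, (x + ((k : ℝ) - 1) / 2) := by
  rcases le_or_gt n 2 with hn | hn
  -- the exponential bound is too weak here: for `n = 2, x = 2` the inequality is an equality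
  · interval_cases n <;>
      simp only [prod_range_succ, range_zero, prod_empty, Nat.cast_zero, Nat.cast_one,
        Nat.cast_ofNat] at hxn ⊢ <;>
      nlinarith
  have hn3 : (3 : ℝ) ≤ n := by exact_mod_cast hn
  have hx1 : 1 < x := by nlinarith
  have hsum : ∑ k ∈ range n, ((k : ℝ) + 1) / (2 * x - 1) ≤ log 2 := by
    have gauss (m : ℕ) : ∑ k ∈ range m, ((k : ℝ) + 1) = m * (m + 1) / 2 := by
      induction m with
      | zero => simp
      | succ m ih => rw [sum_range_succ, ih]; push_cast; ring
    rw [← sum_div, gauss, div_le_iff₀ (by linarith)]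
    nlinarith [log_two_gt_d9]
  calc ∏ k ∈ range n, (x + k)
      ≤ ∏ k ∈ range n, ((x + ((k : ℝ) - 1) / 2) * exp ((k + 1) / (2 * x - 1))) :=
        prod_le_prod (fun k _ => by positivity) fun k _ => add_nat_le_add_half_mul_exp hx1 k
    _ = (∏ k ∈ range n, (x + ((k : ℝ) - 1) / 2)) *
          exp (∑ k ∈ range n, ((k : ℝ) + 1) / (2 * x - 1)) := by
        rw [prod_mul_distrib, exp_sum]
    _ ≤ (∏ k ∈ range n, (x + ((k : ℝ) - 1) / 2)) * 2 := by
        gcongr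
        · exact prod_nonneg fun k _ => by have := k.cast_nonneg (α := ℝ); linarith
        · exact (exp_le_exp.2 hsum).trans (exp_log two_pos).le
    _ = _ := mul_comm _ _

theorem Real.Gamma_mul_Gamma_add_nat_le_two_mul_sq {x : ℝ} {n : ℕ} (hx : 1 ≤ x)
    (hxn : (n : ℝ) ^ 2 - n ≤ x) :
    Gamma x * Gamma (x + n) ≤ 2 * Gamma (x + n / 2) ^ 2 :=
  calc Gamma x * Gamma (x + n) = Gamma x ^ 2 * ∏ k ∈ range n, (x + k) := by
        rw [Gamma_add_nat_eq_mul_prod (by linarith)]; ring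
    _ ≤ Gamma x ^ 2 * (2 * ∏ k ∈ range n, (x + ((k : ℝ) - 1) / 2)) := by
        gcongr; exact prod_add_nat_le_two_mul_prod hx hxn
    _ = 2 * (Gamma x ^ 2 * ∏ k ∈ range n, (x + ((k : ℝ) - 1) / 2)) := by ring
    _ ≤ 2 * Gamma (x + n / 2) ^ 2 := by
        gcongr; exact Gamma_sq_mul_prod_le_Gamma_add_half_nat_sq (by linarith) n

theorem one_add_mul_one_add_rpow_neg_le {a b α : ℝ} (ha : 0 ≤ a) (hb : 0 ≤ b)
    (hα : 0 ≤ α) :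
    (1 + a) ^ (-α) * (1 + b) ^ (-α) ≤ (1 + a + b) ^ (-α) := by
  rw [← mul_rpow (by linarith) (by linarith)]
  exact rpow_le_rpow_of_nonpos (by linarith) (by nlinarith) (by linarith)

theorem Real.Gamma_ratio_mul_inv_sq_eq_inv {s α : ℝ} (h₁ : Gamma (α - s / 2) ≠ 0)
    (h₂ : Gamma α ≠ 0) :
    Gamma (α - s / 2) ^ 2 / (Gamma (α - s) * Gamma α) *
        (π ^ (s / 2) * Gamma (α - s / 2) / Gamma α)⁻¹ ^ 2 =
      (π ^ s * Gamma (α - s) / Gamma α)⁻¹ := by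
  have hπ : π ^ s = (π ^ (s / 2)) ^ 2 := by
    rw [← rpow_mul_natCast pi_pos.le]; norm_num
  have : π ^ (s / 2) ≠ 0 := (rpow_pos_of_pos pi_pos _).ne'
  rw [hπ]
  generalize Gamma (α - s / 2) = g at *
  field_simp

theorem ofReal_smul_cauchyMeasure_prod_le (n : ℕ) {α : ℝ} (hα : (n : ℝ) < α) :
    ENNReal.ofReal (Gamma (α - n / 2) ^ 2 / (Gamma (α - n) * Gamma α)) •
      (cauchyMeasure n α).prod (cauchyMeasure n α) ≤ cauchyMeasure2 n α := by
  have hn := n.cast_nonneg (α := ℝ)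
  have hΓ₁ : 0 < Gamma (α - n / 2) := Gamma_pos_of_pos (by linarith)
  have hΓ₂ : 0 < Gamma (α - n) := Gamma_pos_of_pos (by linarith)
  have hΓ : 0 < Gamma α := Gamma_pos_of_pos (by linarith)
  have hc : 0 < π ^ ((n : ℝ) / 2) * Gamma (α - n / 2) / Gamma α := by
    have := rpow_pos_of_pos pi_pos ((n : ℝ) / 2); positivity
  unfold cauchyMeasure cauchyMeasure2
  rw [prod_withDensity (by fun_prop) (by fun_prop), ← Measure.volume_eq_prod,
    ← withDensity_smul' _ _ ENNReal.ofReal_ne_top]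
  refine withDensity_mono (ae_of_all _ fun q => ?_)
  simp only [Pi.smul_apply, smul_eq_mul]
  rw [← ENNReal.ofReal_mul (by positivity), ← ENNReal.ofReal_mul (by positivity)]
  refine ENNReal.ofReal_le_ofReal ?_
  calc _ = Gamma (α - n / 2) ^ 2 / (Gamma (α - n) * Gamma α) *
          (π ^ ((n : ℝ) / 2) * Gamma (α - n / 2) / Gamma α)⁻¹ ^ 2 *
          ((1 + ‖q.1‖ ^ 2) ^ (-α) * (1 + ‖q.2‖ ^ 2) ^ (-α)) := by ring
    _ ≤ (π ^ (n : ℝ) * Gamma (α - n) / Gamma α)⁻¹ *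
          (1 + ‖q.1‖ ^ 2 + ‖q.2‖ ^ 2) ^ (-α) := by
        rw [Gamma_ratio_mul_inv_sq_eq_inv hΓ₁.ne' hΓ.ne']
        gcongr
        exact one_add_mul_one_add_rpow_neg_le (by positivity) (by positivity) (by linarith)

theorem cauchy_product_comparison_general (n : ℕ) (α : ℝ) (hα : (n : ℝ) + 1 ≤ α) :
    (∀ B : Set (EuclideanSpace ℝ (Fin n) × EuclideanSpace ℝ (Fin n)), MeasurableSet B →
      ENNReal.ofReal
          (Real.Gamma (α - (n : ℝ) / 2) ^ 2 / (Real.Gamma (α - n) * Real.Gamma α)) *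
        ((cauchyMeasure n α).prod (cauchyMeasure n α)) B ≤ cauchyMeasure2 n α B) ∧
    ((n : ℝ) ^ 2 ≤ α →
      1 / 2 ≤ Real.Gamma (α - (n : ℝ) / 2) ^ 2 / (Real.Gamma (α - n) * Real.Gamma α)) := by
  refine ⟨fun B _ => ofReal_smul_cauchyMeasure_prod_le n (by linarith) B, fun hαn => ?_⟩
  have h := Gamma_mul_Gamma_add_nat_le_two_mul_sq (x := α - n) (n := n) (by linarith)
    (by linarith)
  rw [sub_add_cancel, show α - n + n / 2 = α - n / 2 by ring] at h
  have := Gamma_pos_of_pos (by linarith : 0 < α - n)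
  have := Gamma_pos_of_pos (by linarith : 0 < α)
  rw [le_div_iff₀ (by positivity)]
  linarith

theorem cauchy_product_comparison (n : ℕ) (hn : 1 ≤ n) (α : ℝ) (hα : (n : ℝ) + 1 ≤ α) :
    (∀ B : Set (EuclideanSpace ℝ (Fin n) × EuclideanSpace ℝ (Fin n)), MeasurableSet B →
      ENNReal.ofReal
          (Real.Gamma (α - (n : ℝ) / 2) ^ 2 / (Real.Gamma (α - n) * Real.Gamma α)) *
        ((cauchyMeasure n α).prod (cauchyMeasure n α)) B ≤ cauchyMeasure2 n α B) ∧
    ((n : ℝ) ^ 2 ≤ α →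
      1 / 2 ≤ Real.Gamma (α - (n : ℝ) / 2) ^ 2 / (Real.Gamma (α - n) * Real.Gamma α)) :=
  cauchy_product_comparison_general n α hα
end

section
/- For x ≥ 1/2, √(2e)·(x/e)^x ≤ Γ(x + 1/2) ≤ √(2π)·(x/e)^x. Consequently, for h ≥ 0 and x ≥ h + 1/2, Γ(x − h + 1/2)/Γ(x + 1/2) ≤ √(π/e)·(e/x)^h. -/
/-!
Put `B x = log Γ(x + 1/2) - (x log x - x)`, so that `Γ(x + 1/2) = exp (B x) * (x / e) ^ x`.
Then `B' x = ψ(x + 1/2) - log x ≥ 0`, because `ψ t ≥ log (t - 1/2)`: the difference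
`ψ t - log (t - 1/2)` does not increase under `t ↦ t + 1` (as `log ((t + 1/2)/(t - 1/2)) ≥ 1/t`),
while log-convexity of `Γ` gives `ψ t ≥ log (t - 1)`, which pushes its limit to `0`.
Hence `B x ≥ B (1/2) = log √(2e)`. Log-convexity also gives `Γ(n + 1/2) ≤ n! / √n`, i.e.
`B n ≤ log (√2 · stirlingSeq n) → log √(2π)`, and monotonicity carries this bound down to every `x`.
The ratio bound divides the two bounds and uses `((x - h)/e) ^ (x - h) ≤ (x/e) ^ (x - h)`.
-/

open Real Filter Set Topology

namespace Batir

noncomputable def digamma (t : ℝ) : ℝ := deriv (log ∘ Gamma) t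

variable {t : ℝ}

lemma hasDerivAt_log_Gamma (ht : 0 < t) : HasDerivAt (log ∘ Gamma) (digamma t) t :=
  ((differentiableAt_Gamma fun m => by linarith [(Nat.cast_nonneg m : (0 : ℝ) ≤ m)]).log
    (Gamma_pos_of_pos ht).ne').hasDerivAt

lemma log_Gamma_add_one (ht : 0 < t) : log (Gamma (t + 1)) = log t + log (Gamma t) := by
  rw [Gamma_add_one ht.ne', log_mul ht.ne' (Gamma_pos_of_pos ht).ne']

lemma digamma_add_one (ht : 0 < t) : digamma (t + 1) = digamma t + t⁻¹ := by
  have hshift : HasDerivAt (fun s => log (Gamma (s + 1))) (digamma (t + 1)) t :=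
    (hasDerivAt_log_Gamma (by linarith)).comp_add_const t 1
  have hsum : HasDerivAt (fun s => log s + log (Gamma s)) (t⁻¹ + digamma t) t :=
    (hasDerivAt_log ht.ne').add (hasDerivAt_log_Gamma ht)
  have heq : (fun s => log s + log (Gamma s)) =ᶠ[𝓝 t] fun s => log (Gamma (s + 1)) := by
    filter_upwards [eventually_gt_nhds ht] with s hs using (log_Gamma_add_one hs).symm
  exact hshift.unique (hsum.congr_of_eventuallyEq heq.symm) |>.trans (add_comm _ _)

lemma log_sub_one_le_digamma (ht : 1 < t) : log (t - 1) ≤ digamma t := by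
  have hslope := convexOn_log_Gamma.slope_le_of_hasDerivAt (x := t - 1) (y := t)
    (mem_Ioi.2 (by linarith)) (mem_Ioi.2 (by linarith)) (by linarith)
    (hasDerivAt_log_Gamma (by linarith))
  have := log_Gamma_add_one (t := t - 1) (by linarith)
  rw [sub_add_cancel] at this
  simpa [slope_def_field, this] using hslope

lemma inv_le_log_add_half_sub_log_sub_half (ht : 1 / 2 < t) :
    t⁻¹ ≤ log (t + 1 / 2) - log (t - 1 / 2) := by
  have ht0 : t ≠ 0 := by linarith
  have ht' : t - 1 / 2 ≠ 0 := by linarith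
  have hfirst := le_hasSum (hasSum_log_one_add_inv (a := t - 1 / 2) (by linarith)) 0
    fun k _ => by positivity
  have hterm : 2 * (1 / (2 * ((0 : ℕ) : ℝ) + 1)) * (1 / (2 * (t - 1 / 2) + 1)) ^ (2 * 0 + 1)
      = t⁻¹ := by
    rw [show 2 * (t - 1 / 2) + 1 = 2 * t by ring]
    norm_num
    field_simp
  have hone : 1 + (t - 1 / 2)⁻¹ = (t + 1 / 2) / (t - 1 / 2) := by
    rw [eq_div_iff ht', add_mul, inv_mul_cancel₀ ht']; ring
  rwa [hterm, hone, log_div (by linarith) ht'] at hfirst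

lemma digamma_sub_log_add_nat_le (ht : 1 / 2 < t) (n : ℕ) :
    digamma (t + n) - log (t + n - 1 / 2) ≤ digamma t - log (t - 1 / 2) := by
  induction n with
  | zero => simp
  | succ n ih =>
    have hn : (0 : ℝ) ≤ n := n.cast_nonneg
    have hstep := inv_le_log_add_half_sub_log_sub_half (t := t + n) (by linarith)
    rw [Nat.cast_succ, ← add_assoc, digamma_add_one (by linarith),
      show t + n + 1 - 1 / 2 = t + n + 1 / 2 by ring]
    linarith

lemma log_sub_half_le_digamma (ht : 1 / 2 < t) : log (t - 1 / 2) ≤ digamma t := by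
  have hbound (n : ℕ) : -(1 / ((n : ℝ) + 1)) ≤ digamma t - log (t - 1 / 2) := by
    have hn : (0 : ℝ) ≤ n := n.cast_nonneg
    have hchain := digamma_sub_log_add_nat_le ht (n + 1)
    have hconv := log_sub_one_le_digamma (t := t + (n + 1 : ℕ)) (by push_cast; linarith)
    push_cast at hchain hconv
    rw [show t + (n + 1) - 1 = t + n by ring] at hconv
    rw [show t + (n + 1) - 1 / 2 = t + n + 1 / 2 by ring] at hchain
    have hlog := log_le_sub_one_of_pos (x := (t + n + 1 / 2) / (t + n)) (by positivity)
    rw [log_div (by positivity) (by positivity)] at hlog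
    have hsmall : (t + n + 1 / 2) / (t + n) - 1 ≤ 1 / ((n : ℝ) + 1) := by
      rw [div_sub_one (by positivity), div_le_div_iff₀ (by positivity) (by positivity)]
      nlinarith
    linarith
  simpa using le_of_tendsto' tendsto_one_div_add_atTop_nhds_zero_nat.neg hbound

lemma log_Gamma_add_half_le (ht : 0 < t) :
    log (Gamma (t + 1 / 2)) ≤ log (Gamma (t + 1)) - log t / 2 := by
  have hmid := convexOn_log_Gamma.2 (mem_Ioi.2 ht) (mem_Ioi.2 (by linarith : (0 : ℝ) < t + 1))
    (by norm_num : (0 : ℝ) ≤ 1 / 2) (by norm_num : (0 : ℝ) ≤ 1 / 2) (by norm_num)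
  have hrec := log_Gamma_add_one ht
  simp only [smul_eq_mul, Function.comp_apply] at hmid
  rw [show 1 / 2 * t + 1 / 2 * (t + 1) = t + 1 / 2 by ring] at hmid
  linarith

noncomputable def stirlingRem (x : ℝ) : ℝ := log (Gamma (x + 1 / 2)) - (x * log x - x)

variable {x : ℝ}

lemma Gamma_add_half_eq (hx : 0 < x) :
    Gamma (x + 1 / 2) = exp (stirlingRem x) * (x / exp 1) ^ x := by
  rw [stirlingRem, rpow_def_of_pos (by positivity), log_div hx.ne' (exp_pos 1).ne', log_exp,
    ← exp_add, exp_eq_exp.mpr (by ring), exp_log (Gamma_pos_of_pos (by linarith))]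

lemma stirlingRem_one_half : stirlingRem (1 / 2) = log √(2 * exp 1) := by
  rw [stirlingRem, log_sqrt (by positivity), log_mul two_ne_zero (exp_pos 1).ne', log_exp,
    one_div, log_inv]
  norm_num
  ring

lemma hasDerivAt_stirlingRem (hx : 0 < x) :
    HasDerivAt stirlingRem (digamma (x + 1 / 2) - log x) x := by
  have h := ((hasDerivAt_log_Gamma (by linarith)).comp_add_const x (1 / 2)).sub
    ((hasDerivAt_mul_log hx.ne').sub (hasDerivAt_id x))
  exact h.congr_deriv (by ring)

lemma monotoneOn_stirlingRem : MonotoneOn stirlingRem (Ici (1 / 2)) := by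
  refine monotoneOn_of_hasDerivWithinAt_nonneg (convex_Ici _)
    (fun x hx =>
      (hasDerivAt_stirlingRem (by linarith [mem_Ici.1 hx])).continuousAt.continuousWithinAt)
    (fun x hx => (hasDerivAt_stirlingRem ?_).hasDerivWithinAt) fun x hx => ?_
  all_goals rw [interior_Ici, mem_Ioi] at hx
  · linarith
  · have := log_sub_half_le_digamma (t := x + 1 / 2) (by linarith)
    rw [add_sub_cancel_right] at this
    linarith

open Stirling in
lemma stirlingRem_natCast_le {n : ℕ} (hn : n ≠ 0) :
    stirlingRem n ≤ log (√2 * stirlingSeq n) := by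
  have hpos : 0 < stirlingSeq n := by
    obtain ⟨m, rfl⟩ := Nat.exists_eq_succ_of_ne_zero hn
    exact stirlingSeq'_pos m
  have hn' : (0 : ℝ) < n := by positivity
  have hmid := log_Gamma_add_half_le hn'
  rw [log_mul (by positivity) hpos.ne', log_stirlingSeq_formula, log_sqrt zero_le_two,
    log_mul two_ne_zero hn'.ne', log_div hn'.ne' (exp_pos 1).ne', log_exp]
  rw [Gamma_nat_eq_factorial] at hmid
  rw [stirlingRem]
  linarith

lemma stirlingRem_le (hx : 1 / 2 ≤ x) : stirlingRem x ≤ log √(2 * π) := by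
  have hlim : Tendsto (fun n : ℕ => log (√2 * Stirling.stirlingSeq n)) atTop
      (𝓝 (log √(2 * π))) := by
    rw [sqrt_mul zero_le_two]
    exact (Stirling.tendsto_stirlingSeq_sqrt_pi.const_mul √2).log (by positivity)
  refine ge_of_tendsto hlim ?_
  filter_upwards [eventually_ge_atTop ⌈x⌉₊] with n hn
  have hxn : x ≤ n := (Nat.le_ceil x).trans (by exact_mod_cast hn)
  have hn0 : n ≠ 0 := (Nat.cast_pos.1 (by linarith : (0 : ℝ) < n)).ne'
  exact (monotoneOn_stirlingRem hx (hx.trans hxn) hxn).trans (stirlingRem_natCast_le hn0)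

lemma sqrt_two_mul_exp_one_mul_rpow_le_Gamma_add_half (hx : 1 / 2 ≤ x) :
    √(2 * exp 1) * (x / exp 1) ^ x ≤ Gamma (x + 1 / 2) := by
  rw [Gamma_add_half_eq (by linarith), ← exp_log (by positivity : 0 < √(2 * exp 1)),
    ← stirlingRem_one_half]
  gcongr
  exact monotoneOn_stirlingRem (by norm_num) hx hx

lemma Gamma_add_half_le_sqrt_two_mul_pi_mul_rpow (hx : 1 / 2 ≤ x) :
    Gamma (x + 1 / 2) ≤ √(2 * π) * (x / exp 1) ^ x := by
  rw [Gamma_add_half_eq (by linarith), ← exp_log (by positivity : 0 < √(2 * π))]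
  gcongr
  exact stirlingRem_le hx

lemma Gamma_sub_add_half_div_Gamma_add_half_le {h : ℝ} (hh : 0 ≤ h) (hx : h + 1 / 2 ≤ x) :
    Gamma (x - h + 1 / 2) / Gamma (x + 1 / 2) ≤ √(π / exp 1) * (exp 1 / x) ^ h := by
  have hx0 : 0 < x := by linarith
  have hxh : 0 < x - h := by linarith
  have hbase : 0 < x / exp 1 := by positivity
  calc Gamma (x - h + 1 / 2) / Gamma (x + 1 / 2)
      ≤ √(2 * π) * ((x - h) / exp 1) ^ (x - h) / (√(2 * exp 1) * (x / exp 1) ^ x) :=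
        div_le_div₀ (by positivity) (Gamma_add_half_le_sqrt_two_mul_pi_mul_rpow (by linarith))
          (by positivity) (sqrt_two_mul_exp_one_mul_rpow_le_Gamma_add_half (by linarith))
    _ ≤ √(2 * π) * (x / exp 1) ^ (x - h) / (√(2 * exp 1) * (x / exp 1) ^ x) := by
        gcongr
        linarith
    _ = √(π / exp 1) * (exp 1 / x) ^ h := by
        rw [rpow_sub hbase, ← inv_div x, inv_rpow hbase.le,
          show 2 * π = π / exp 1 * (2 * exp 1) by field_simp, sqrt_mul (by positivity)]
        field_simp

end Batir

open Batir in
theorem batir_gamma_bounds :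
    (∀ x : ℝ, 1 / 2 ≤ x →
      Real.sqrt (2 * Real.exp 1) * (x / Real.exp 1) ^ x ≤ Real.Gamma (x + 1 / 2) ∧
      Real.Gamma (x + 1 / 2) ≤ Real.sqrt (2 * Real.pi) * (x / Real.exp 1) ^ x) ∧
    (∀ h x : ℝ, 0 ≤ h → h + 1 / 2 ≤ x →
      Real.Gamma (x - h + 1 / 2) / Real.Gamma (x + 1 / 2) ≤
        Real.sqrt (Real.pi / Real.exp 1) * (Real.exp 1 / x) ^ h) :=
  ⟨fun _ hx => ⟨sqrt_two_mul_exp_one_mul_rpow_le_Gamma_add_half hx,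
    Gamma_add_half_le_sqrt_two_mul_pi_mul_rpow hx⟩,
    fun _ _ hh hx => Gamma_sub_add_half_div_Gamma_add_half_le hh hx⟩
end
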